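/- Let n ≥ 1 and let g be distributed according to the Haar probability measure on the compact group U(n) of unitary n×n complex matrices. Let e_1 be the first standard basis vector of ℂ^n and ω := Σ_{j=1}^n e_j ∧ (i·e_j) ∈ ⋀²_ℝ(ℂ^n). Then for every ℝ-linear functional φ on ⋀²_ℝ(ℂ^n), one has ∫_{U(n)} φ( Λ²(g)(e_1 ∧ (i·e_1)) ) dg = (1/n)·φ(ω); that is, the expectation of the random bivector Λ²(g)(e_1 ∧ i e_1) equals ω/n. -/

import Mathlib

/-!
Let `c = g e₁` be the first column of a Haar-random `g ∈ U(n)`. Left multiplication by the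
unitaries `diag(1, …, -1, …, 1)`, `diag(1, …, i, …, 1)` and by permutation matrices preserves the
Haar measure. For a real bilinear form `b` on `ℂ`, flipping the sign of `c_k` kills
`E[b(c_j, c_k)]` when `j ≠ k`; rotating `c_j` by `i` and using
`b(z, z) + b(iz, iz) = |z|² (b(1, 1) + b(i, i))` gives
`E[b(c_j, c_j)] = E|c_j|² (b(1, 1) + b(i, i)) / 2`; and permuting rows together with `‖c‖ = 1` gives `E|c_j|² = 1/n`. Since
`Λ²(g)(e₁ ∧ ie₁) = c ∧ ic`, applying this to the real bilinear form `(v, w) ↦ φ(v ∧ iw)` yields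
`∑_j (φ(e_j ∧ ie_j) + φ(ie_j ∧ -e_j)) / (2n) = φ(ω) / n`.
-/

open MeasureTheory

noncomputable section

/-- The symplectic bivector `ω = ∑_j e_j ∧ (i·e_j)` of `ℂ^n`, viewed inside the real exterior
algebra of `ℂ^n` (so it lies in `⋀²_ℝ(ℂ^n)`); `e_j` is the standard complex basis. -/
def omegaC (n : ℕ) : ExteriorAlgebra ℝ (Fin n → ℂ) :=
  ∑ j : Fin n,
    ExteriorAlgebra.ι ℝ (Pi.single j (1 : ℂ)) * ExteriorAlgebra.ι ℝ (Pi.single j Complex.I)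

/-- The action of a unitary matrix `g ∈ U(n)` on the real exterior algebra of `ℂ^n`, via the
underlying `ℝ`-linear map of `g` on `ℂ^n`; its restriction to `⋀^d_ℝ(ℂ^n)` is `Λ^d(g)`. -/
def unitaryExtAction (n : ℕ) (g : Matrix.unitaryGroup (Fin n) ℂ) :
    ExteriorAlgebra ℝ (Fin n → ℂ) →ₐ[ℝ] ExteriorAlgebra ℝ (Fin n → ℂ) :=
  ExteriorAlgebra.map
    ((Matrix.toLin' (g : Matrix (Fin n) (Fin n) ℂ)).restrictScalars ℝ)

open Matrix Complex

namespace Matrix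

variable {ι : Type*} [Fintype ι] [DecidableEq ι]

theorem isCompact_unitaryGroup {𝕜 : Type*} [RCLike 𝕜] :
    IsCompact (unitaryGroup ι 𝕜 : Set (Matrix ι ι 𝕜)) := by
  have hclosed : IsClosed (unitaryGroup ι 𝕜 : Set (Matrix ι ι 𝕜)) := by
    have : (unitaryGroup ι 𝕜 : Set (Matrix ι ι 𝕜)) = {U | star U * U = 1} :=
      Set.ext fun _ => mem_unitaryGroup_iff'
    rw [this]
    exact isClosed_eq (continuous_star.matrix_mul continuous_id) continuous_const
  refine (isCompact_univ_pi fun _ => isCompact_univ_pi fun _ => isCompact_closedBall (0 : 𝕜) 1)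
    |>.of_isClosed_subset hclosed fun U hU i _ j _ => ?_
  simpa using entry_norm_bound_of_unitary hU i j

instance {𝕜 : Type*} [RCLike 𝕜] : CompactSpace (unitaryGroup ι 𝕜) :=
  isCompact_iff_compactSpace.mp isCompact_unitaryGroup

variable {α : Type*} [CommRing α] [StarRing α]

theorem diagonal_mem_unitaryGroup {d : ι → α} (hd : ∀ i, star (d i) * d i = 1) :
    diagonal d ∈ unitaryGroup ι α := by
  rw [mem_unitaryGroup_iff', star_eq_conjTranspose, diagonal_conjTranspose,
    diagonal_mul_diagonal]
  simp only [Pi.star_apply, hd]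
  exact diagonal_one

theorem permMatrix_mem_unitaryGroup (σ : Equiv.Perm ι) :
    σ.permMatrix α ∈ unitaryGroup ι α := by
  rw [mem_unitaryGroup_iff', star_eq_conjTranspose, conjTranspose_permMatrix, ← permMatrix_mul,
    mul_inv_cancel, permMatrix_one]

theorem UnitaryGroup.sum_normSq_col (U : unitaryGroup ι ℂ) (a : ι) :
    ∑ i, normSq ((U : Matrix ι ι ℂ) i a) = 1 := by
  have h := congrArg (fun M : Matrix ι ι ℂ => (M a a).re) (UnitaryGroup.star_mul_self U)
  simpa [Matrix.mul_apply, normSq_apply, re_sum] using h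

end Matrix

theorem LinearMap.apply_eq_re_im (b : ℂ →ₗ[ℝ] ℂ →ₗ[ℝ] ℝ) (z w : ℂ) :
    b z w = z.re * w.re * b 1 1 + z.re * w.im * b 1 I + z.im * w.re * b I 1
      + z.im * w.im * b I I := by
  have h (u : ℂ) : u = u.re • (1 : ℂ) + u.im • I := by simp
  conv_lhs => rw [h z, h w]
  simp only [map_add, map_smul, LinearMap.add_apply, LinearMap.smul_apply, smul_eq_mul]
  ring

theorem LinearMap.apply_add_apply_I_mul (b : ℂ →ₗ[ℝ] ℂ →ₗ[ℝ] ℝ) (z : ℂ) :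
    b z z + b (I * z) (I * z) = normSq z * (b 1 1 + b I I) := by
  rw [b.apply_eq_re_im z, b.apply_eq_re_im (I * z)]
  simp only [mul_re, I_re, zero_mul, I_im, one_mul, zero_sub, mul_im, zero_add, normSq_apply]
  ring

theorem LinearMap.continuous_apply₂ (b : ℂ →ₗ[ℝ] ℂ →ₗ[ℝ] ℝ) :
    Continuous fun p : ℂ × ℂ => b p.1 p.2 :=
  (continuous_congr fun p : ℂ × ℂ => (b.apply_eq_re_im p.1 p.2).symm).mp (by fun_prop)

@[fun_prop]
theorem Matrix.continuous_unitaryGroup_apply {ι : Type*} [Fintype ι] [DecidableEq ι]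
    (i j : ι) :
    Continuous fun g : unitaryGroup ι ℂ => (g : Matrix ι ι ℂ) i j :=
  continuous_subtype_val.matrix_elem i j

namespace Matrix.UnitaryGroup

variable {ι : Type*} [Fintype ι] [DecidableEq ι]
  [MeasurableSpace (unitaryGroup ι ℂ)] [BorelSpace (unitaryGroup ι ℂ)]
  (μ : Measure (unitaryGroup ι ℂ))

theorem integrable_of_continuous [IsFiniteMeasure μ] {F : unitaryGroup ι ℂ → ℝ}
    (hF : Continuous F) : Integrable F μ :=
  hF.integrable_of_hasCompactSupport (HasCompactSupport.of_compactSpace F)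

theorem integrable_bilin_apply [IsFiniteMeasure μ] (b : ℂ →ₗ[ℝ] ℂ →ₗ[ℝ] ℝ)
    {f₁ f₂ : unitaryGroup ι ℂ → ℂ} (h₁ : Continuous f₁) (h₂ : Continuous f₂) :
    Integrable (fun g => b (f₁ g) (f₂ g)) μ :=
  integrable_of_continuous μ <| b.continuous_apply₂.comp (h₁.prodMk h₂)

variable [μ.IsMulLeftInvariant]

theorem integral_comp_diagonal_mul {d : ι → ℂ} (hd : ∀ i, star (d i) * d i = 1)
    (F : Matrix ι ι ℂ → ℝ) :
    ∫ g : unitaryGroup ι ℂ, F (diagonal d * g) ∂μ = ∫ g, F g ∂μ :=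
  integral_mul_left_eq_self (fun g : unitaryGroup ι ℂ => F g) ⟨_, diagonal_mem_unitaryGroup hd⟩

theorem integral_comp_permMatrix_mul (σ : Equiv.Perm ι) (F : Matrix ι ι ℂ → ℝ) :
    ∫ g : unitaryGroup ι ℂ, F (σ.permMatrix ℂ * g) ∂μ = ∫ g, F g ∂μ :=
  integral_mul_left_eq_self (fun g : unitaryGroup ι ℂ => F g) ⟨_, permMatrix_mem_unitaryGroup σ⟩

variable [IsProbabilityMeasure μ]

theorem integral_normSq_apply (j a : ι) :
    ∫ g : unitaryGroup ι ℂ, normSq ((g : Matrix ι ι ℂ) j a) ∂μ = (Fintype.card ι : ℝ)⁻¹ := by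
  have hsame (i : ι) : ∫ g : unitaryGroup ι ℂ, normSq (g.1 i a) ∂μ
      = ∫ g : unitaryGroup ι ℂ, normSq (g.1 j a) ∂μ := by
    simpa [Equiv.Perm.permMatrix, PEquiv.toMatrix_toPEquiv_mul] using
      (integral_comp_permMatrix_mul μ (Equiv.swap i j) (fun M => normSq (M i a))).symm
  have hsum : ∑ i, ∫ g : unitaryGroup ι ℂ, normSq (g.1 i a) ∂μ = 1 := by
    rw [← integral_finsetSum _ fun i _ => integrable_of_continuous μ (by fun_prop)]
    simp [sum_normSq_col]
  rw [Finset.sum_congr rfl fun i _ => hsame i, Finset.sum_const, Finset.card_univ,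
    nsmul_eq_mul] at hsum
  have : Nonempty ι := ⟨j⟩
  have : (Fintype.card ι : ℝ) ≠ 0 := Nat.cast_ne_zero.mpr Fintype.card_ne_zero
  field_simp
  linarith

theorem integral_bilin_apply_entries (b : ℂ →ₗ[ℝ] ℂ →ₗ[ℝ] ℝ) (j k a : ι) :
    ∫ g : unitaryGroup ι ℂ, b ((g : Matrix ι ι ℂ) j a) ((g : Matrix ι ι ℂ) k a) ∂μ =
      if j = k then (b 1 1 + b I I) / (2 * Fintype.card ι) else 0 := by
  split_ifs with hjk
  · subst hjk
    have hrot : ∫ g : unitaryGroup ι ℂ, b (I * g.1 j a) (I * g.1 j a) ∂μ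
        = ∫ g : unitaryGroup ι ℂ, b (g.1 j a) (g.1 j a) ∂μ := by
      simpa [diagonal_mul] using integral_comp_diagonal_mul μ (d := Pi.mulSingle j I)
        (fun i => by by_cases h : i = j <;> simp [h]) (fun M => b (M j a) (M j a))
    have hc := continuous_unitaryGroup_apply j a
    have hIc := (continuous_const_mul I).comp hc
    have hsum := integral_add (integrable_bilin_apply μ b hc hc)
      (integrable_bilin_apply μ b hIc hIc)
    simp only [Function.comp_apply, b.apply_add_apply_I_mul, integral_mul_const,
      integral_normSq_apply, hrot] at hsum
    linear_combination -hsum / 2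
  · have hflip : ∫ g : unitaryGroup ι ℂ, b (g.1 j a) (-g.1 k a) ∂μ
        = ∫ g : unitaryGroup ι ℂ, b (g.1 j a) (g.1 k a) ∂μ := by
      simpa [diagonal_mul, hjk] using integral_comp_diagonal_mul μ (d := Pi.mulSingle k (-1))
        (fun i => by by_cases h : i = k <;> simp [h]) (fun M => b (M j a) (M k a))
    simp only [map_neg, integral_neg] at hflip
    linarith

theorem integral_bilin_apply_col (β : (ι → ℂ) →ₗ[ℝ] (ι → ℂ) →ₗ[ℝ] ℝ) (a : ι) :
    ∫ g : unitaryGroup ι ℂ, β ((g : Matrix ι ι ℂ).col a) ((g : Matrix ι ι ℂ).col a) ∂μ =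
      (∑ j, (β (Pi.single j 1) (Pi.single j 1) + β (Pi.single j I) (Pi.single j I)))
        / (2 * Fintype.card ι) := by
  let b (j k : ι) : ℂ →ₗ[ℝ] ℂ →ₗ[ℝ] ℝ :=
    β.compl₁₂ (LinearMap.single ℝ (fun _ => ℂ) j) (LinearMap.single ℝ (fun _ => ℂ) k)
  have hexpand (v : ι → ℂ) : β v v = ∑ j, ∑ k, b j k (v j) (v k) := by
    conv_lhs => rw [← Finset.univ_sum_single v]
    simp [b, map_sum]
    exact Finset.sum_comm
  have hint (j k : ι) : Integrable (fun g : unitaryGroup ι ℂ => b j k (g.1 j a) (g.1 k a)) μ :=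
    integrable_bilin_apply μ (b j k) (continuous_unitaryGroup_apply j a)
      (continuous_unitaryGroup_apply k a)
  conv_lhs => simp only [hexpand, col_apply]
  rw [integral_finsetSum _ fun j _ => integrable_finsetSum _ fun k _ => hint j k]
  simp_rw [integral_finsetSum _ fun k _ => hint _ k, integral_bilin_apply_entries,
    Finset.sum_ite_eq, Finset.mem_univ, if_true, Finset.sum_div]
  rfl

end Matrix.UnitaryGroup

theorem unitaryExtAction_ι_mul_ι (n : ℕ) (g : unitaryGroup (Fin n) ℂ) (v w : Fin n → ℂ) :
    unitaryExtAction n g (ExteriorAlgebra.ι ℝ v * ExteriorAlgebra.ι ℝ w) =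
      ExteriorAlgebra.ι ℝ ((g : Matrix (Fin n) (Fin n) ℂ) *ᵥ v) *
        ExteriorAlgebra.ι ℝ ((g : Matrix (Fin n) (Fin n) ℂ) *ᵥ w) := by
  simp [unitaryExtAction, ExteriorAlgebra.map_apply_ι]

/-- Let `g` be Haar-distributed on the compact group `U(n)` (i.e. distributed
according to the left-invariant Borel probability measure). Then for every `ℝ`-linear
functional `φ` on the real exterior algebra of `ℂ^n` (in particular on `⋀²_ℝ(ℂ^n)`),
`∫_{U(n)} φ(Λ²(g)(e₁ ∧ i e₁)) dg = (1/n) · φ(ω)`; that is, the expectation of the random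
bivector `Λ²(g)(e₁ ∧ i e₁)` equals `ω/n`. -/
theorem stmt_9 (n : ℕ) (hn : 1 ≤ n)
    [MeasurableSpace (Matrix.unitaryGroup (Fin n) ℂ)]
    [BorelSpace (Matrix.unitaryGroup (Fin n) ℂ)]
    (μ : Measure (Matrix.unitaryGroup (Fin n) ℂ))
    [IsProbabilityMeasure μ]
    (hinv : ∀ h : Matrix.unitaryGroup (Fin n) ℂ,
      Measure.map (fun g => h * g) μ = μ)
    (φ : ExteriorAlgebra ℝ (Fin n → ℂ) →ₗ[ℝ] ℝ) :
    (∫ g, φ (unitaryExtAction n g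
        (ExteriorAlgebra.ι ℝ (Pi.single (⟨0, hn⟩ : Fin n) (1 : ℂ)) *
          ExteriorAlgebra.ι ℝ (Pi.single (⟨0, hn⟩ : Fin n) Complex.I))) ∂μ)
      = (1 / n : ℝ) * φ (omegaC n) := by
  have : μ.IsMulLeftInvariant := ⟨hinv⟩
  let β : (Fin n → ℂ) →ₗ[ℝ] (Fin n → ℂ) →ₗ[ℝ] ℝ :=
    ((LinearMap.mul ℝ _).compl₁₂ (ExteriorAlgebra.ι ℝ) (ExteriorAlgebra.ι ℝ ∘ₗ
      (I • LinearMap.id))).compr₂ φ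
  have hpoint (g : unitaryGroup (Fin n) ℂ) : φ (unitaryExtAction n g
        (ExteriorAlgebra.ι ℝ (Pi.single (⟨0, hn⟩ : Fin n) (1 : ℂ)) *
          ExteriorAlgebra.ι ℝ (Pi.single (⟨0, hn⟩ : Fin n) Complex.I))) =
      β (g.1.col ⟨0, hn⟩) (g.1.col ⟨0, hn⟩) := by
    simp [β, unitaryExtAction_ι_mul_ι, mulVec_single]
  have hdiag (j : Fin n) : β (Pi.single j 1) (Pi.single j 1) + β (Pi.single j I) (Pi.single j I)
      = 2 * φ (ExteriorAlgebra.ι ℝ (Pi.single j 1) * ExteriorAlgebra.ι ℝ (Pi.single j I)) := by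
    have hanti := eq_neg_of_add_eq_zero_right <|
      ExteriorAlgebra.ι_add_mul_swap (R := ℝ) (Pi.single j (1 : ℂ) : Fin n → ℂ) (Pi.single j I)
    simp only [β, LinearMap.compr₂_apply, LinearMap.compl₁₂_apply, LinearMap.mul_apply',
      LinearMap.comp_apply, LinearMap.smul_apply, LinearMap.id_apply, ← Pi.single_smul,
      smul_eq_mul, mul_one, I_mul_I, Pi.single_neg, map_neg, hanti, neg_neg]
    ring
  simp_rw [hpoint, UnitaryGroup.integral_bilin_apply_col, hdiag, omegaC, map_sum,
    ← Finset.mul_sum, Fintype.card_fin]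
  field_simp
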